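/- For n = 3 and a ∈ B³, the function U_a(x) = √((|a|²|x|² - 2a·x + 1)/(1-|a|²)) - ((1-|x|²)/4)√((1-|a|²)/(|a|²|x|² - 2a·x + 1)) is biharmonic on the closed unit ball B³, is positive there, and satisfies ∂U_a/∂r = (1/2) U_a on S². -/

import Mathlib

/-!
With `Q(x) = |a|²|x|² - 2a·x + 1` and `c = 1 - |a|²` one has
`U_a = c^(-1/2) Q^(1/2) + (c^(1/2)/4) (|x|² - 1) Q^(-1/2)`.
Since `|∇Q|² = 4|a|²Q` and `ΔQ = 2n|a|²`, the Laplacian maps each function `(A + C|x|²) Q^p`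
to a sum of two functions of the same shape, with exponents `p` and `p - 1`. In `ℝ³` this makes
`Q^(-1/2)` (for `a ≠ 0` a multiple of the Newtonian potential with pole `a/|a|²`) and
`(1 - |a|²|x|²) Q^(-3/2)` harmonic, and `ΔU_a` is a combination of these two.
Positivity comes from `Q ≥ (1 - |a|²)(1 - |x|²)`, and the boundary condition from differentiating
along the ray through a point of `S²`.
-/

open scoped BigOperators RealInnerProductSpace

/-- The Euclidean Laplacian of a function on `ℝⁿ` (as `EuclideanSpace`). -/
noncomputable def lapl {n : ℕ} (f : EuclideanSpace ℝ (Fin n) → ℝ)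
    (x : EuclideanSpace ℝ (Fin n)) : ℝ :=
  ∑ i : Fin n, fderiv ℝ (fun y => fderiv ℝ f y (EuclideanSpace.single i 1)) x
    (EuclideanSpace.single i 1)

open Filter Topology

section Laplacian

variable {n : ℕ} {f g : EuclideanSpace ℝ (Fin n) → ℝ} {x : EuclideanSpace ℝ (Fin n)}

theorem Filter.EventuallyEq.lapl_eq (h : f =ᶠ[𝓝 x] g) : lapl f x = lapl g x := by
  unfold lapl
  refine Finset.sum_congr rfl fun i _ => ?_
  have he : (fun y => fderiv ℝ f y (EuclideanSpace.single i 1)) =ᶠ[𝓝 x]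
      fun y => fderiv ℝ g y (EuclideanSpace.single i 1) :=
    (h.fderiv (𝕜 := ℝ)).mono fun y hy => by simp only [hy]
  rw [he.fderiv_eq]

theorem Filter.EventuallyEq.lapl (h : f =ᶠ[𝓝 x] g) : lapl f =ᶠ[𝓝 x] lapl g :=
  h.eventuallyEq_nhds.mono fun _ hy => hy.lapl_eq

theorem lapl_add (hf : ContDiffAt ℝ 2 f x) (hg : ContDiffAt ℝ 2 g x) :
    lapl (fun y => f y + g y) x = lapl f x + lapl g x := by
  unfold lapl
  rw [← Finset.sum_add_distrib]
  refine Finset.sum_congr rfl fun i _ => ?_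
  set e : EuclideanSpace ℝ (Fin n) := EuclideanSpace.single i 1
  have hdf : ∀ᶠ y in 𝓝 x, DifferentiableAt ℝ f y :=
    (hf.eventually (by simp)).mono fun y hy => hy.differentiableAt (by norm_num)
  have hdg : ∀ᶠ y in 𝓝 x, DifferentiableAt ℝ g y :=
    (hg.eventually (by simp)).mono fun y hy => hy.differentiableAt (by norm_num)
  have hsum : (fun y => fderiv ℝ (fun y => f y + g y) y e) =ᶠ[𝓝 x]
      fun y => fderiv ℝ f y e + fderiv ℝ g y e :=
    (hdf.and hdg).mono fun y hy => by dsimp only; rw [fderiv_fun_add hy.1 hy.2]; rfl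
  have hf' := ((hf.fderiv_right (m := 1) (by norm_num)).differentiableAt one_ne_zero).clm_apply
    (differentiableAt_const e)
  have hg' := ((hg.fderiv_right (m := 1) (by norm_num)).differentiableAt one_ne_zero).clm_apply
    (differentiableAt_const e)
  rw [hsum.fderiv_eq, fderiv_fun_add hf' hg']
  rfl

theorem lapl_eq_trace {G : EuclideanSpace ℝ (Fin n) → EuclideanSpace ℝ (Fin n)}
    {G' : EuclideanSpace ℝ (Fin n) →L[ℝ] EuclideanSpace ℝ (Fin n)}
    (hf : ∀ᶠ y in 𝓝 x, HasGradientAt f (G y) y) (hG : HasFDerivAt G G' x) :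
    lapl f x = LinearMap.trace ℝ _ G'.toLinearMap := by
  rw [LinearMap.trace_eq_sum_inner _ (EuclideanSpace.basisFun (Fin n) ℝ)]
  refine Finset.sum_congr rfl fun i _ => ?_
  set e : EuclideanSpace ℝ (Fin n) := EuclideanSpace.single i 1
  have hfe : (fun y => fderiv ℝ f y e) =ᶠ[𝓝 x] fun y => ⟪G y, e⟫ :=
    hf.mono fun y hy => hy.fderiv_apply
  rw [hfe.fderiv_eq, (hG.inner ℝ (hasFDerivAt_const e x)).fderiv]
  simp [real_inner_comm, e]

end Laplacian

section Gradient

variable {E : Type*} [NormedAddCommGroup E] [InnerProductSpace ℝ E] [CompleteSpace E]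
  {f g : E → ℝ} {F G x : E}

theorem HasGradientAt.add (hf : HasGradientAt f F x) (hg : HasGradientAt g G x) :
    HasGradientAt (fun y => f y + g y) (F + G) x := by
  have h := hf.hasFDerivAt.add hg.hasFDerivAt
  rwa [← map_add] at h

theorem HasGradientAt.hasDerivAt_smul_one (h : HasGradientAt f G x) :
    HasDerivAt (fun t : ℝ => f (t • x)) ⟪G, x⟫ 1 := by
  have hx : HasDerivAt (fun t : ℝ => t • x) x 1 := by
    simpa using (hasDerivAt_id (1 : ℝ)).smul_const x
  rw [← one_smul ℝ x] at h
  exact h.hasFDerivAt.comp_hasDerivAt (1 : ℝ) hx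

end Gradient

section Mobius

variable {E : Type*} [NormedAddCommGroup E] [InnerProductSpace ℝ E]

/-- `(1 - ‖a‖²) / mobiusDenom a x` is the conformal factor of the Möbius automorphism of the unit
ball exchanging `0` and `a`. -/
noncomputable def mobiusDenom (a x : E) : ℝ := ‖a‖ ^ 2 * ‖x‖ ^ 2 - 2 * ⟪a, x⟫ + 1

theorem sq_one_sub_norm_mul_norm_le_mobiusDenom (a x : E) :
    (1 - ‖a‖ * ‖x‖) ^ 2 ≤ mobiusDenom a x := by
  have := real_inner_le_norm a x
  unfold mobiusDenom
  nlinarith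

theorem mobiusDenom_pos {a x : E} (ha : ‖a‖ < 1) (hx : ‖x‖ ≤ 1) : 0 < mobiusDenom a x := by
  have : ‖a‖ * ‖x‖ < 1 := by nlinarith [norm_nonneg a, norm_nonneg x]
  nlinarith [sq_one_sub_norm_mul_norm_le_mobiusDenom a x]

theorem one_sub_sq_mul_one_sub_sq_le_mobiusDenom (a x : E) :
    (1 - ‖a‖ ^ 2) * (1 - ‖x‖ ^ 2) ≤ mobiusDenom a x := by
  nlinarith [sq_one_sub_norm_mul_norm_le_mobiusDenom a x, sq_nonneg (‖a‖ - ‖x‖)]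

noncomputable def mobiusTerm (a : E) (A C p : ℝ) (x : E) : ℝ :=
  (A + C * ‖x‖ ^ 2) * mobiusDenom a x ^ p

noncomputable def mobiusTermGrad (a : E) (A C p : ℝ) (x : E) : E :=
  (2 * p * (A + C * ‖x‖ ^ 2) * mobiusDenom a x ^ (p - 1)) • (‖a‖ ^ 2 • x - a) +
    (2 * C * mobiusDenom a x ^ p) • x

theorem contDiffAt_mobiusTerm (a : E) (A C p : ℝ) {x : E} (hx : 0 < mobiusDenom a x) :
    ContDiffAt ℝ 2 (mobiusTerm a A C p) x := by
  have hS : ContDiff ℝ 2 fun y : E => ‖y‖ ^ 2 := contDiff_norm_sq ℝ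
  have hQ : ContDiff ℝ 2 (mobiusDenom a) :=
    ((contDiff_const.mul hS).sub (contDiff_const.mul (innerSL ℝ a).contDiff)).add contDiff_const
  unfold mobiusTerm
  exact (contDiffAt_const.add (contDiffAt_const.mul hS.contDiffAt)).mul
    (hQ.contDiffAt.rpow_const_of_ne hx.ne')

variable [CompleteSpace E]

theorem hasGradientAt_mobiusDenom (a x : E) :
    HasGradientAt (mobiusDenom a) ((2 : ℝ) • (‖a‖ ^ 2 • x - a)) x := by
  have h := (((hasStrictFDerivAt_norm_sq x).hasFDerivAt.const_mul (‖a‖ ^ 2)).sub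
    (((innerSL ℝ a).hasFDerivAt).const_mul 2)).add_const 1
  refine h.congr_fderiv ?_
  ext v
  simp only [sub_apply, smul_apply, coe_innerSL_apply, nsmul_eq_mul, smul_eq_mul, map_smul,
    map_sub, InnerProductSpace.toDual_apply_apply]
  ring

theorem eventually_mobiusDenom_pos {a x : E} (hx : 0 < mobiusDenom a x) :
    ∀ᶠ y in 𝓝 x, 0 < mobiusDenom a y :=
  (hasGradientAt_mobiusDenom a x).differentiableAt.continuousAt.eventually (lt_mem_nhds hx)

theorem hasGradientAt_mobiusTerm (a : E) (A C p : ℝ) {x : E} (hx : 0 < mobiusDenom a x) :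
    HasGradientAt (mobiusTerm a A C p) (mobiusTermGrad a A C p x) x := by
  have h := (((hasStrictFDerivAt_norm_sq x).hasFDerivAt.const_mul C).const_add A).mul
    ((hasGradientAt_mobiusDenom a x).hasFDerivAt.rpow_const (p := p) (Or.inl hx.ne'))
  refine h.congr_fderiv ?_
  ext v
  simp only [mobiusTermGrad, map_add, map_smul, map_sub, add_apply, smul_apply, sub_apply,
    InnerProductSpace.toDual_apply_apply, smul_eq_mul, coe_innerSL_apply, nsmul_eq_mul]
  ring

end Mobius

theorem lapl_mobiusTerm {n : ℕ} (a : EuclideanSpace ℝ (Fin n)) (A C p : ℝ)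
    {x : EuclideanSpace ℝ (Fin n)} (hx : 0 < mobiusDenom a x) :
    lapl (mobiusTerm a A C p) x =
      mobiusTerm a ((2 * n + 4 * p) * C) 0 p x +
        mobiusTerm a (2 * p * (2 * p - 2 + n) * ‖a‖ ^ 2 * A - 4 * p * C)
          (2 * p * (2 * p + n) * ‖a‖ ^ 2 * C) (p - 1) x := by
  have hQ := (hasGradientAt_mobiusDenom a x).hasFDerivAt
  have hS := (hasStrictFDerivAt_norm_sq x).hasFDerivAt
  have hφ := (((hS.const_mul C).const_add A).const_mul (2 * p)).mul
    (hQ.rpow_const (p := p - 1) (Or.inl hx.ne'))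
  have hψ := (hQ.rpow_const (p := p) (Or.inl hx.ne')).const_mul (2 * C)
  have hB := ((hasFDerivAt_id (𝕜 := ℝ) x).const_smul (‖a‖ ^ 2)).sub_const a
  have hG := (hφ.smul hB).add (hψ.smul (hasFDerivAt_id (𝕜 := ℝ) x))
  rw [lapl_eq_trace ((eventually_mobiusDenom_pos hx).mono
    fun y hy => hasGradientAt_mobiusTerm a A C p hy) hG]
  have hax : ⟪a, x⟫ = (‖a‖ ^ 2 * ‖x‖ ^ 2 + 1 - mobiusDenom a x) / 2 := by
    unfold mobiusDenom; ring
  simp only [mobiusTerm, Pi.mul_apply, Pi.smul_apply, id_eq, smul_eq_mul, nsmul_eq_mul,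
    Nat.cast_ofNat, map_add, map_sub, map_smul, ContinuousLinearMap.coe_id, LinearMap.trace_id,
    finrank_euclideanSpace, Fintype.card_fin, ContinuousLinearMap.coe_smulRight,
    ContinuousLinearMap.toLinearMap_add, ContinuousLinearMap.toLinearMap_smul,
    ContinuousLinearMap.toLinearMap_sub, ContinuousLinearMap.toLinearMap_innerSL_apply,
    LinearMap.trace_smulRight, LinearMap.add_apply, LinearMap.smul_apply, LinearMap.sub_apply,
    ContinuousLinearMap.coe_coe, InnerProductSpace.toDual_apply_apply, innerₛₗ_apply_apply,
    inner_self_eq_norm_sq_to_K, Real.ringHom_apply,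
    real_inner_comm a x, hax, Real.rpow_sub_one hx.ne', zero_mul, add_zero]
  field_simp
  ring

section Dimension3

variable {a x : EuclideanSpace ℝ (Fin 3)}

theorem lapl_mobiusTerm_half_add (A B C : ℝ) (hx : 0 < mobiusDenom a x) :
    lapl (fun y => mobiusTerm a A 0 (1 / 2) y + mobiusTerm a B C (-1 / 2) y) x =
      mobiusTerm a (2 * ‖a‖ ^ 2 * A + 4 * C) 0 (-1 / 2) x +
        mobiusTerm a (2 * C) (-‖a‖ ^ 2 * (2 * C)) (-3 / 2) x := by
  rw [lapl_add (contDiffAt_mobiusTerm a _ _ _ hx) (contDiffAt_mobiusTerm a _ _ _ hx),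
    lapl_mobiusTerm a _ _ _ hx, lapl_mobiusTerm a _ _ _ hx,
    show (1 / 2 : ℝ) - 1 = -1 / 2 by norm_num, show (-1 / 2 : ℝ) - 1 = -3 / 2 by norm_num]
  simp only [mobiusTerm, Nat.cast_ofNat]
  ring

theorem lapl_mobiusTerm_neg_half (A : ℝ) (hx : 0 < mobiusDenom a x) :
    lapl (mobiusTerm a A 0 (-1 / 2)) x = 0 := by
  rw [lapl_mobiusTerm a _ _ _ hx]
  simp only [mobiusTerm, Nat.cast_ofNat]
  ring

theorem lapl_mobiusTerm_neg_three_halves (D : ℝ) (hx : 0 < mobiusDenom a x) :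
    lapl (mobiusTerm a D (-‖a‖ ^ 2 * D) (-3 / 2)) x = 0 := by
  rw [lapl_mobiusTerm a _ _ _ hx]
  simp only [mobiusTerm, Nat.cast_ofNat]
  ring

theorem lapl_lapl_mobiusTerm_half_add (A B C : ℝ) (hx : 0 < mobiusDenom a x) :
    lapl (lapl fun y => mobiusTerm a A 0 (1 / 2) y + mobiusTerm a B C (-1 / 2) y) x = 0 := by
  have hΔ := (eventually_mobiusDenom_pos hx).mono fun y hy => lapl_mobiusTerm_half_add A B C hy
  rw [Filter.EventuallyEq.lapl_eq hΔ,
    lapl_add (contDiffAt_mobiusTerm a _ _ _ hx) (contDiffAt_mobiusTerm a _ _ _ hx),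
    lapl_mobiusTerm_neg_half _ hx, lapl_mobiusTerm_neg_three_halves _ hx, add_zero]

end Dimension3

section MobiusU

variable {E : Type*} [NormedAddCommGroup E] [InnerProductSpace ℝ E] {a x : E}

noncomputable def mobiusU (a x : E) : ℝ :=
  √(mobiusDenom a x / (1 - ‖a‖ ^ 2)) - (1 - ‖x‖ ^ 2) / 4 * √((1 - ‖a‖ ^ 2) / mobiusDenom a x)

theorem mobiusU_eq_mobiusTerm_add (ha : ‖a‖ < 1) (hx : 0 < mobiusDenom a x) :
    mobiusU a x = mobiusTerm a (√(1 - ‖a‖ ^ 2))⁻¹ 0 (1 / 2) x +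
      mobiusTerm a (-(√(1 - ‖a‖ ^ 2) / 4)) (√(1 - ‖a‖ ^ 2) / 4) (-1 / 2) x := by
  have hc : 0 < 1 - ‖a‖ ^ 2 := by nlinarith [norm_nonneg a]
  rw [mobiusU, mobiusTerm, mobiusTerm, Real.sqrt_div hx.le, Real.sqrt_div hc.le,
    show (-1 / 2 : ℝ) = -(1 / 2) by norm_num, Real.rpow_neg hx.le, ← Real.sqrt_eq_rpow]
  field_simp
  ring

theorem mobiusU_pos (ha : ‖a‖ < 1) (hx : ‖x‖ ≤ 1) : 0 < mobiusU a x := by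
  have hc : 0 < 1 - ‖a‖ ^ 2 := by nlinarith [norm_nonneg a]
  have hQ := mobiusDenom_pos ha hx
  have hu : 0 < √(mobiusDenom a x / (1 - ‖a‖ ^ 2)) := Real.sqrt_pos.mpr (div_pos hQ hc)
  have hu2 : √(mobiusDenom a x / (1 - ‖a‖ ^ 2)) ^ 2 = mobiusDenom a x / (1 - ‖a‖ ^ 2) :=
    Real.sq_sqrt (div_pos hQ hc).le
  have hinv : √((1 - ‖a‖ ^ 2) / mobiusDenom a x) = (√(mobiusDenom a x / (1 - ‖a‖ ^ 2)))⁻¹ := by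
    rw [← Real.sqrt_inv, inv_div]
  have hle : 1 - ‖x‖ ^ 2 ≤ mobiusDenom a x / (1 - ‖a‖ ^ 2) := by
    rw [le_div_iff₀ hc, mul_comm]
    exact one_sub_sq_mul_one_sub_sq_le_mobiusDenom a x
  rw [mobiusU, hinv]
  set u := √(mobiusDenom a x / (1 - ‖a‖ ^ 2))
  rw [show u - (1 - ‖x‖ ^ 2) / 4 * u⁻¹ = (u ^ 2 - (1 - ‖x‖ ^ 2) / 4) / u by field_simp]
  exact div_pos (by nlinarith) hu

variable [CompleteSpace E]

theorem mobiusU_eventuallyEq (ha : ‖a‖ < 1) (hx : 0 < mobiusDenom a x) :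
    mobiusU a =ᶠ[𝓝 x] fun y => mobiusTerm a (√(1 - ‖a‖ ^ 2))⁻¹ 0 (1 / 2) y +
      mobiusTerm a (-(√(1 - ‖a‖ ^ 2) / 4)) (√(1 - ‖a‖ ^ 2) / 4) (-1 / 2) y :=
  (eventually_mobiusDenom_pos hx).mono fun _ hy => mobiusU_eq_mobiusTerm_add ha hy

theorem deriv_mobiusU_smul_one (ha : ‖a‖ < 1) (hx : ‖x‖ = 1) :
    deriv (fun t : ℝ => mobiusU a (t • x)) 1 = mobiusU a x / 2 := by
  have hQ := mobiusDenom_pos ha hx.le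
  have hG := ((hasGradientAt_mobiusTerm a _ _ _ hQ).add (hasGradientAt_mobiusTerm a _ _ _ hQ))
    |>.congr_of_eventuallyEq (mobiusU_eventuallyEq ha hQ)
  rw [hG.hasDerivAt_smul_one.deriv, mobiusU_eq_mobiusTerm_add ha hQ]
  have hc : 0 < 1 - ‖a‖ ^ 2 := by nlinarith [norm_nonneg a]
  have hs : 0 < √(1 - ‖a‖ ^ 2) := Real.sqrt_pos.mpr hc
  have hs2 : √(1 - ‖a‖ ^ 2) ^ 2 = 1 - ‖a‖ ^ 2 := Real.sq_sqrt hc.le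
  have hq : 0 < √(mobiusDenom a x) := Real.sqrt_pos.mpr hQ
  have hq2 : √(mobiusDenom a x) ^ 2 = mobiusDenom a x := Real.sq_sqrt hQ.le
  have hax : ⟪a, x⟫ = (‖a‖ ^ 2 + 1 - mobiusDenom a x) / 2 := by
    unfold mobiusDenom; rw [hx]; ring
  simp only [mobiusTermGrad, mobiusTerm, inner_add_left, inner_sub_left, real_inner_smul_left,
    real_inner_self_eq_norm_sq, hx, hax, Real.rpow_sub_one hQ.ne',
    show (-1 / 2 : ℝ) = -(1 / 2) by norm_num, Real.rpow_neg hQ.le, ← Real.sqrt_eq_rpow]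
  field_simp
  rw [hq2, hs2]
  ring

end MobiusU

/-- for `a ∈ B³`, the function
`U_a(x) = √((|a|²|x|²-2a·x+1)/(1-|a|²)) - ((1-|x|²)/4)√((1-|a|²)/(|a|²|x|²-2a·x+1))`
is biharmonic on the closed unit ball, positive there, and satisfies `∂U_a/∂r = U_a/2` on `S²`. -/
theorem stmt17 (a : EuclideanSpace ℝ (Fin 3)) (ha : ‖a‖ < 1) :
    let U : EuclideanSpace ℝ (Fin 3) → ℝ := fun x =>
      Real.sqrt ((‖a‖ ^ 2 * ‖x‖ ^ 2 - 2 * ⟪a, x⟫ + 1) / (1 - ‖a‖ ^ 2)) -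
        (1 - ‖x‖ ^ 2) / 4 *
          Real.sqrt ((1 - ‖a‖ ^ 2) / (‖a‖ ^ 2 * ‖x‖ ^ 2 - 2 * ⟪a, x⟫ + 1))
    (∀ x : EuclideanSpace ℝ (Fin 3), ‖x‖ ≤ 1 → lapl (lapl U) x = 0) ∧
    (∀ x : EuclideanSpace ℝ (Fin 3), ‖x‖ ≤ 1 → 0 < U x) ∧
    (∀ x : EuclideanSpace ℝ (Fin 3), ‖x‖ = 1 →
      deriv (fun t : ℝ => U (t • x)) 1 = U x / 2) := by
  intro U
  exact ⟨fun x hx => ((mobiusU_eventuallyEq ha (mobiusDenom_pos ha hx)).lapl.lapl_eq).trans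
      (lapl_lapl_mobiusTerm_half_add _ _ _ (mobiusDenom_pos ha hx)),
    fun x hx => mobiusU_pos ha hx, fun x hx => deriv_mobiusU_smul_one ha hx⟩
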